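/- arXiv:2405.09652 — 5 statements merged into one kernel-verified Lean document; each statement's English description precedes it below -/
import Mathlib

section
/- Let 𝔤 be a nilpotent Lie algebra and x, y ∈ 𝔤. If [x,[x,y]] and [y,[x,y]] both lie in [L,[L,[L,L]]], where L is the Lie subalgebra generated by x and y, then every nested bracket in x and y of length at least 3 vanishes. -/
/-- `NestedBracket x y m z` means that `z` is a nested (iterated) Lie bracket in `x` and `y`
of length `m`, i.e. involving `m` occurrences of `x` or `y`. -/
inductive NestedBracket {𝔤 : Type*} [LieRing 𝔤] (x y : 𝔤) : ℕ → 𝔤 → Prop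
  | base_x : NestedBracket x y 1 x
  | base_y : NestedBracket x y 1 y
  | bracket {m m' : ℕ} {a b : 𝔤} : NestedBracket x y m a → NestedBracket x y m' b →
      NestedBracket x y (m + m') ⁅a, b⁆

/-!
Modulo `[L,[L,[L,L]]]` the element `⁅X, Y⁆` commutes with both generators, hence with all of
`L`; running the same argument once more, every commutator of `L` is central modulo
`[L,[L,[L,L]]]`, i.e. `[L,[L,L]] ≤ [L,[L,[L,L]]]`. In a nilpotent Lie algebra a term of the lower
central series that is contained in the next one vanishes, so `L` is two-step nilpotent, and a
nested bracket of length at least three is `±⁅a, ⁅b, c⁆⁆` with `a, b, c ∈ L`.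
-/

section

open LieModule

variable {R L M : Type*} [CommRing R] [LieRing L] [LieAlgebra R L]
  [AddCommGroup M] [Module R M] [LieRingModule L M] [LieModule R L M]

theorem LieSubmodule.mem_normalizer_of_lieSpan_eq_top {S : Set L}
    (hS : LieSubalgebra.lieSpan R L S = ⊤) {N : LieSubmodule R L M} {m : M}
    (h : ∀ s ∈ S, ⁅s, m⁆ ∈ N) : m ∈ N.normalizer := by
  rw [LieSubmodule.mem_normalizer]
  intro a
  have ha : a ∈ LieSubalgebra.lieSpan R L S := hS ▸ LieSubalgebra.mem_top a
  induction ha using LieSubalgebra.lieSpan_induction with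
  | mem s hs => exact h s hs
  | zero => simp
  | add a b _ _ ha hb => simpa only [add_lie] using add_mem ha hb
  | smul r a _ ha => rw [smul_lie]; exact SMulMemClass.smul_mem r ha
  | lie a b _ _ ha hb => simpa only [lie_lie] using sub_mem (N.lie_mem hb) (N.lie_mem ha)

theorem LieIdeal.top_lie_top_le_of_lieSpan_eq_top {S : Set L}
    (hS : LieSubalgebra.lieSpan R L S = ⊤) (I : LieIdeal R L)
    (h : ∀ s ∈ S, ∀ t ∈ S, ⁅s, t⁆ ∈ I) : ⁅(⊤ : LieIdeal R L), (⊤ : LieIdeal R L)⁆ ≤ I := by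
  rw [LieSubmodule.top_lie_le_iff_le_normalizer]
  have hS_le : S ⊆ ((I.normalizer : LieIdeal R L) : LieSubalgebra R L) := fun t ht =>
    LieSubmodule.mem_normalizer_of_lieSpan_eq_top hS fun s hs => h s hs t ht
  intro a _
  exact (LieSubalgebra.lieSpan_le.mpr hS_le) (hS ▸ LieSubalgebra.mem_top a)

theorem LieModule.lowerCentralSeries_eq_bot_of_le_succ [IsNilpotent L M] {k : ℕ}
    (h : lowerCentralSeries R L M k ≤ lowerCentralSeries R L M (k + 1)) :
    lowerCentralSeries R L M k = ⊥ := by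
  have h_le : ∀ n, lowerCentralSeries R L M k ≤ lowerCentralSeries R L M (k + n) := by
    intro n
    induction n with
    | zero => rfl
    | succ n ih =>
      calc lowerCentralSeries R L M k
          ≤ lowerCentralSeries R L M (k + 1) := h
        _ = ⁅(⊤ : LieIdeal R L), lowerCentralSeries R L M k⁆ := lowerCentralSeries_succ R L M k
        _ ≤ ⁅(⊤ : LieIdeal R L), lowerCentralSeries R L M (k + n)⁆ :=
          LieSubmodule.mono_lie_right _ ih
        _ = lowerCentralSeries R L M (k + (n + 1)) := (lowerCentralSeries_succ R L M _).symm
  obtain ⟨n, hn⟩ := IsNilpotent.nilpotent R L M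
  rw [eq_bot_iff, ← hn]
  exact (h_le n).trans (antitone_lowerCentralSeries R L M (by omega))

theorem LieSubalgebra.lieSpan_eq_top_of_coe_eq {x y : L}
    {X Y : LieSubalgebra.lieSpan R L {x, y}} (hX : (X : L) = x) (hY : (Y : L) = y) :
    LieSubalgebra.lieSpan R (LieSubalgebra.lieSpan R L {x, y}) {X, Y} = ⊤ := by
  have h_preimage : ((↑) : LieSubalgebra.lieSpan R L {x, y} → L) ⁻¹' {x, y} = {X, Y} := by
    ext Z
    simp only [Set.mem_preimage, Set.mem_insert_iff, Set.mem_singleton_iff, ← hX, ← hY,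
      Subtype.ext_iff]
  rw [← h_preimage]
  exact LieSubalgebra.lieSpan_lieSpan_coe_preimage

theorem LieAlgebra.lowerCentralSeries_two_le_three_of_lieSpan_pair_eq_top {X Y : L}
    (hXY : LieSubalgebra.lieSpan R L {X, Y} = ⊤)
    (h1 : ⁅X, ⁅X, Y⁆⁆ ∈ lowerCentralSeries R L L 3)
    (h2 : ⁅Y, ⁅X, Y⁆⁆ ∈ lowerCentralSeries R L L 3) :
    lowerCentralSeries R L L 2 ≤ lowerCentralSeries R L L 3 := by
  have hXY_mem : ⁅X, Y⁆ ∈ (lowerCentralSeries R L L 3).normalizer :=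
    LieSubmodule.mem_normalizer_of_lieSpan_eq_top hXY (by rintro s (rfl | rfl) <;> assumption)
  have h_comm : ∀ s ∈ ({X, Y} : Set L), ∀ t ∈ ({X, Y} : Set L),
      ⁅s, t⁆ ∈ (lowerCentralSeries R L L 3).normalizer := by
    rintro s (rfl | rfl) t (rfl | rfl)
    · simp
    · exact hXY_mem
    · rw [← lie_skew]; exact neg_mem hXY_mem
    · simp
  rw [lowerCentralSeries_succ, LieSubmodule.top_lie_le_iff_le_normalizer]
  exact LieIdeal.top_lie_top_le_of_lieSpan_eq_top hXY _ h_comm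

namespace NestedBracket

variable {x y z : L} {m : ℕ}

theorem pos (hz : NestedBracket x y m z) : 0 < m := by
  induction hz <;> omega

variable (R) in
theorem mem_lieSpan (hz : NestedBracket x y m z) : z ∈ LieSubalgebra.lieSpan R L {x, y} := by
  induction hz with
  | base_x => exact LieSubalgebra.subset_lieSpan (Set.mem_insert x _)
  | base_y => exact LieSubalgebra.subset_lieSpan (Set.mem_insert_of_mem x rfl)
  | bracket _ _ ha hb => exact LieSubalgebra.lie_mem _ ha hb

variable (R) in
theorem exists_eq_lie_of_two_le (hz : NestedBracket x y m z) (hm : 2 ≤ m) :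
    ∃ a ∈ LieSubalgebra.lieSpan R L {x, y}, ∃ b ∈ LieSubalgebra.lieSpan R L {x, y},
      z = ⁅a, b⁆ := by
  cases hz with
  | base_x | base_y => omega
  | bracket ha hb => exact ⟨_, ha.mem_lieSpan R, _, hb.mem_lieSpan R, rfl⟩

theorem eq_zero_of_three_le
    (hL : lowerCentralSeries R (LieSubalgebra.lieSpan R L {x, y})
      (LieSubalgebra.lieSpan R L {x, y}) 2 = ⊥)
    (hz : NestedBracket x y m z) (hm : 3 ≤ m) : z = 0 := by
  set H := LieSubalgebra.lieSpan R L {x, y}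
  have h_lie_lie : ∀ a ∈ H, ∀ b ∈ H, ∀ c ∈ H, ⁅a, ⁅b, c⁆⁆ = 0 := by
    intro a ha b hb c hc
    have : ⁅(⟨a, ha⟩ : H), ⁅(⟨b, hb⟩ : H), ⟨c, hc⟩⁆⁆ ∈ lowerCentralSeries R H H 2 :=
      LieSubmodule.lie_mem_lie (LieSubmodule.mem_top _)
        (LieSubmodule.lie_mem_lie (LieSubmodule.mem_top _) (LieSubmodule.mem_top _))
    rw [hL, LieSubmodule.mem_bot] at this
    exact congrArg Subtype.val this
  cases hz with
  | base_x | base_y => omega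
  | @bracket m₁ m₂ a b ha hb =>
    obtain h | h : 2 ≤ m₁ ∨ 2 ≤ m₂ := by have := ha.pos; have := hb.pos; omega
    · obtain ⟨c, hc, d, hd, rfl⟩ := ha.exists_eq_lie_of_two_le R h
      rw [← lie_skew, h_lie_lie b (hb.mem_lieSpan R) c hc d hd, neg_zero]
    · obtain ⟨c, hc, d, hd, rfl⟩ := hb.exists_eq_lie_of_two_le R h
      exact h_lie_lie a (ha.mem_lieSpan R) c hc d hd

end NestedBracket

end

theorem stmt1_general {K 𝔤 : Type*} [Field K] [LieRing 𝔤] [LieAlgebra K 𝔤]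
    [LieModule.IsNilpotent 𝔤 𝔤] (x y : 𝔤)
    (X Y : ↥(LieSubalgebra.lieSpan K 𝔤 {x, y})) (hX : (X : 𝔤) = x) (hY : (Y : 𝔤) = y)
    (h1 : ⁅X, ⁅X, Y⁆⁆ ∈ LieModule.lowerCentralSeries K
      ↥(LieSubalgebra.lieSpan K 𝔤 {x, y}) ↥(LieSubalgebra.lieSpan K 𝔤 {x, y}) 3)
    (h2 : ⁅Y, ⁅X, Y⁆⁆ ∈ LieModule.lowerCentralSeries K
      ↥(LieSubalgebra.lieSpan K 𝔤 {x, y}) ↥(LieSubalgebra.lieSpan K 𝔤 {x, y}) 3) :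
    ∀ m : ℕ, 3 ≤ m → ∀ z : 𝔤, NestedBracket x y m z → z = 0 := by
  have hXY := LieSubalgebra.lieSpan_eq_top_of_coe_eq (R := K) hX hY
  have : LieModule.IsNilpotent (LieSubalgebra.lieSpan K 𝔤 {x, y})
      (LieSubalgebra.lieSpan K 𝔤 {x, y}) :=
    Function.Injective.lieAlgebra_isNilpotent (f := (LieSubalgebra.lieSpan K 𝔤 {x, y}).incl)
      Subtype.val_injective
  intro m hm z hz
  exact hz.eq_zero_of_three_le (LieModule.lowerCentralSeries_eq_bot_of_le_succ
    (LieAlgebra.lowerCentralSeries_two_le_three_of_lieSpan_pair_eq_top hXY h1 h2)) hm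

/-- Let `𝔤` be a (finite-dimensional, characteristic zero) nilpotent Lie algebra and
`x, y ∈ 𝔤`, and let `L = ⟨x,y⟩` be the Lie subalgebra generated by `x` and `y`.  If
`⁅x,⁅x,y⁆⁆` and `⁅y,⁅x,y⁆⁆` both lie in `[L,[L,[L,L]]]` (the third term of the lower
central series of `L`), then every nested bracket in `x` and `y` of length at least 3
vanishes. -/
theorem stmt1 {K 𝔤 : Type*} [Field K] [CharZero K] [LieRing 𝔤] [LieAlgebra K 𝔤]
    [FiniteDimensional K 𝔤] [LieModule.IsNilpotent 𝔤 𝔤] (x y : 𝔤)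
    (X Y : ↥(LieSubalgebra.lieSpan K 𝔤 {x, y})) (hX : (X : 𝔤) = x) (hY : (Y : 𝔤) = y)
    (h1 : ⁅X, ⁅X, Y⁆⁆ ∈ LieModule.lowerCentralSeries K
      ↥(LieSubalgebra.lieSpan K 𝔤 {x, y}) ↥(LieSubalgebra.lieSpan K 𝔤 {x, y}) 3)
    (h2 : ⁅Y, ⁅X, Y⁆⁆ ∈ LieModule.lowerCentralSeries K
      ↥(LieSubalgebra.lieSpan K 𝔤 {x, y}) ↥(LieSubalgebra.lieSpan K 𝔤 {x, y}) 3) :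
    ∀ m : ℕ, 3 ≤ m → ∀ z : 𝔤, NestedBracket x y m z → z = 0 :=
  stmt1_general x y X Y hX hY h1 h2
end

section
/- Let ω: V×V → Z be skew-symmetric bilinear, β: U×U → Z skew-symmetric, W ⊂ U a complement of ker(β^ad) with β = i*β ⊕ 0 relative to a direct sum decomposition U = W ⊕ W'. Then the inclusion {f ∈ Hom(W,V) | f*ω = i*β} ↪ {f ∈ Hom(U,V) | f*ω = β}, given by extending linearly by zero on W', admits a deformation retraction; the retraction and homotopy are induced by the linear homotopy H_t(w,w') = (w, t·w'). -/
/-!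
Write `P`, `Q` for the projections of the splitting `U = W ⊕ W'` and `A_t = P + t • Q`.
Since `A_t u - u ∈ W' = ker β^ad` and `β` is skew, `β` vanishes on `W'` in both slots, so
`A_t^* β = β`; hence `f ↦ f ∘ A_t` preserves the fiber `{f | f^* ω = β}`.  At `t = 1` this is the
identity, at `t = 0` it factors through `P`, and it fixes every `f` vanishing on `W'`.  Such `f`
are exactly the extensions by zero of their restrictions to `W`, which lie in the fiber over
`i^* β` because pulling back along `i` commutes with composition.
-/

open LinearMap

section Algebra

variable {R M F Z : Type*} [CommRing R] [AddCommGroup M] [Module R M]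
  [AddCommGroup F] [Module R F] [AddCommGroup Z] [Module R Z] {q : Submodule R M}

theorem LinearMap.ker_le_ker_flip_of_skew {β : M →ₗ[R] M →ₗ[R] Z}
    (hβ : ∀ u v, β u v = -β v u) : ker β ≤ ker β.flip := fun u hu => by
  ext v
  rw [flip_apply, hβ, mem_ker.1 hu]
  simp

theorem LinearMap.comp_eq_self_of_sub_mem (f : M →ₗ[R] F) (hf : q ≤ ker f) {A : M →ₗ[R] M}
    (hA : ∀ u, A u - u ∈ q) : f ∘ₗ A = f := by
  ext u
  rw [comp_apply, ← sub_eq_zero, ← map_sub]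
  exact hf (hA u)

theorem LinearMap.compl₁₂_eq_self_of_sub_mem (β : M →ₗ[R] M →ₗ[R] Z) (hl : q ≤ ker β)
    (hr : q ≤ ker β.flip) {A : M →ₗ[R] M} (hA : ∀ u, A u - u ∈ q) : β.compl₁₂ A A = β := by
  ext u v
  have hu : β (A u - u) = 0 := hl (hA u)
  have hv : β u (A v - v) = 0 := LinearMap.congr_fun (hr (hA v)) u
  calc β (A u) (A v) = β (A u - u) (A v) + β u (A v - v) + β u v := by
        simp only [map_sub, sub_apply]; abel
    _ = β u v := by rw [hu, hv, zero_apply, zero_add, zero_add]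

theorem Submodule.comp_subtype_comp_projectionOnto {p : Submodule R M} (h : IsCompl p q)
    (f : M →ₗ[R] F) (hf : q ≤ ker f) : (f ∘ₗ p.subtype) ∘ₗ p.projectionOnto q h = f :=
  f.comp_eq_self_of_sub_mem hf fun u => by
    rw [← neg_sub]
    exact q.neg_mem (sub_projection_mem h u)

end Algebra

namespace Submodule.IsTopCompl

variable {𝕜 M : Type*} [NontriviallyNormedField 𝕜] [NormedAddCommGroup M] [NormedSpace 𝕜 M]
  {p q : Submodule 𝕜 M} (h : IsTopCompl p q)

/-- The linear homotopy `(x, y) ↦ (x, t • y)` of `M = p ⊕ q`. -/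
noncomputable def scaleRight (t : 𝕜) : M →L[𝕜] M :=
  p.projectionL q h + t • q.projectionL p h.symm

theorem scaleRight_apply_sub_self_mem (t : 𝕜) (u : M) : h.scaleRight t u - u ∈ q := by
  have hu := projectionL_add_projectionL_eq_self h u
  have : h.scaleRight t u - u = (t - 1) • q.projectionL p h.symm u := by
    simp only [scaleRight, _root_.add_apply, _root_.smul_apply]
    linear_combination (norm := module) hu
  rw [this]
  exact q.smul_mem _ (projectionL_apply_mem _ u)

theorem scaleRight_one : h.scaleRight 1 = .id 𝕜 M := by
  rw [scaleRight, one_smul, projectionL_add_projectionL_eq_id]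

theorem scaleRight_zero : h.scaleRight 0 = p.projectionL q h := by
  simp [scaleRight]

theorem continuous_scaleRight : Continuous h.scaleRight :=
  continuous_const.add (continuous_id.smul continuous_const)

end Submodule.IsTopCompl

section Fiber

open Submodule

variable {𝔽 U V Z : Type*} [RCLike 𝔽] [NormedAddCommGroup U] [NormedSpace 𝔽 U]
  [NormedAddCommGroup V] [NormedSpace 𝔽 V] [AddCommGroup Z] [Module 𝔽 Z]
  {ω : V →ₗ[𝔽] V →ₗ[𝔽] Z} {β : U →ₗ[𝔽] U →ₗ[𝔽] Z} {W W' : Submodule 𝔽 U}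

noncomputable def fiberHomotopy (h : IsTopCompl W W') (hl : W' ≤ ker β) (hr : W' ≤ ker β.flip) :
    C(ℝ × {f : U →L[𝔽] V // ω.compl₁₂ (f : U →ₗ[𝔽] V) (f : U →ₗ[𝔽] V) = β},
      {f : U →L[𝔽] V // ω.compl₁₂ (f : U →ₗ[𝔽] V) (f : U →ₗ[𝔽] V) = β}) where
  toFun x := ⟨x.2.1 ∘L h.scaleRight (x.1 : 𝔽), by
    show ω.compl₁₂ ((x.2.1 : U →ₗ[𝔽] V) ∘ₗ (h.scaleRight (x.1 : 𝔽) : U →ₗ[𝔽] U))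
      ((x.2.1 : U →ₗ[𝔽] V) ∘ₗ (h.scaleRight (x.1 : 𝔽) : U →ₗ[𝔽] U)) = β
    rw [compl₁₂_comp_comp, x.2.2]
    exact β.compl₁₂_eq_self_of_sub_mem hl hr (h.scaleRight_apply_sub_self_mem _)⟩
  continuous_toFun := by
    refine Continuous.subtype_mk ?_ _
    exact (continuous_subtype_val.comp continuous_snd).clm_comp
      (h.continuous_scaleRight.comp (RCLike.continuous_ofReal.comp continuous_fst))

theorem fiberHomotopy_apply_coe (h : IsTopCompl W W') (hl : W' ≤ ker β) (hr : W' ≤ ker β.flip)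
    (t : ℝ) (f : {f : U →L[𝔽] V // ω.compl₁₂ (f : U →ₗ[𝔽] V) (f : U →ₗ[𝔽] V) = β}) :
    (fiberHomotopy h hl hr (t, f)).1 = f.1 ∘L h.scaleRight (t : 𝔽) :=
  rfl

end Fiber

theorem stmt5_general {𝔽 U V Z : Type*} [RCLike 𝔽]
    [NormedAddCommGroup U] [NormedSpace 𝔽 U] [FiniteDimensional 𝔽 U]
    [NormedAddCommGroup V] [NormedSpace 𝔽 V]
    [AddCommGroup Z] [Module 𝔽 Z]
    (ω : V →ₗ[𝔽] V →ₗ[𝔽] Z)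
    (β : U →ₗ[𝔽] U →ₗ[𝔽] Z) (hβ : ∀ u u', β u u' = - β u' u)
    (W W' : Submodule 𝔽 U) (hc : IsCompl W W') (hW' : W' = LinearMap.ker β) :
    ∃ H : C(ℝ × {f : U →L[𝔽] V //
          LinearMap.compl₁₂ ω (f : U →ₗ[𝔽] V) (f : U →ₗ[𝔽] V) = β},
        {f : U →L[𝔽] V // LinearMap.compl₁₂ ω (f : U →ₗ[𝔽] V) (f : U →ₗ[𝔽] V) = β}),
      -- the homotopy is induced by `H_t(w,w') = (w, t·w')`
      (∀ (t : ℝ) f, ((H (t, f)).1 : U →ₗ[𝔽] V)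
          = ((f.1 : U →ₗ[𝔽] V)).comp
              ((W.subtype.comp (Submodule.linearProjOfIsCompl W W' hc))
                + ((t : 𝔽) • (W'.subtype.comp (Submodule.linearProjOfIsCompl W' W hc.symm)))))
      -- it ends at the identity
      ∧ (∀ f, H (1, f) = f)
      -- it starts in the image of the inclusion, i.e. among maps vanishing on `W'`
      ∧ (∀ f, ∀ u ∈ W', ((H (0, f)).1 : U → V) u = 0)
      -- it fixes the image of the inclusion at all times
      ∧ (∀ (t : ℝ) f, (∀ u ∈ W', (f.1 : U → V) u = 0) → H (t, f) = f)
      -- and the image of the inclusion (maps vanishing on `W'`) consists exactly of the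
      -- extensions by zero of the maps `g : W → V` with `g*ω = i*β`
      ∧ (∀ f : {f : U →L[𝔽] V //
            LinearMap.compl₁₂ ω (f : U →ₗ[𝔽] V) (f : U →ₗ[𝔽] V) = β},
          (∀ u ∈ W', (f.1 : U → V) u = 0) ↔
            ∃ g : {g : ↥W →L[𝔽] V // LinearMap.compl₁₂ ω (g : ↥W →ₗ[𝔽] V) (g : ↥W →ₗ[𝔽] V)
                = LinearMap.compl₁₂ β W.subtype W.subtype},
              (f.1 : U →ₗ[𝔽] V)
                = ((g.1 : ↥W →ₗ[𝔽] V)).comp (Submodule.linearProjOfIsCompl W W' hc)) := by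
  have h : Submodule.IsTopCompl W W' :=
    Submodule.IsCompl.isTopCompl_of_isClosed_of_finiteDimensional hc W.closed_of_finiteDimensional
  have hl : W' ≤ ker β := hW'.le
  have hr : W' ≤ ker β.flip := hl.trans (ker_le_ker_flip_of_skew hβ)
  refine ⟨fiberHomotopy h hl hr, fun t f => rfl, fun f => ?_, fun f u hu => ?_,
    fun t f hf => ?_, fun f => ⟨fun hf => ?_, ?_⟩⟩
  · ext1
    rw [fiberHomotopy_apply_coe, RCLike.ofReal_one, h.scaleRight_one]
    rfl
  · rw [fiberHomotopy_apply_coe, RCLike.ofReal_zero, h.scaleRight_zero]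
    simp [(Submodule.projectionL_apply_eq_zero_iff h).2 hu]
  · ext1
    exact ContinuousLinearMap.coe_injective
      ((f.1 : U →ₗ[𝔽] V).comp_eq_self_of_sub_mem hf (h.scaleRight_apply_sub_self_mem _))
  · refine ⟨⟨f.1 ∘L W.subtypeL, ?_⟩,
      (Submodule.comp_subtype_comp_projectionOnto hc (f.1 : U →ₗ[𝔽] V) hf).symm⟩
    exact congrArg (fun γ => γ.compl₁₂ W.subtype W.subtype) f.2
  · rintro ⟨g, hg⟩ u hu
    have hu0 : W.projectionOnto W' hc u = 0 :=
      (Submodule.projectionOnto_apply_eq_zero_iff hc).2 hu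
    rw [← ContinuousLinearMap.coe_coe, hg]
    exact (congrArg g.1 hu0).trans (map_zero g.1)

/-- Let `ω : V × V → Z` be skew-symmetric bilinear, `β : U × U → Z` skew-symmetric,
`W ⊆ U` a complement of `W' = ker(β^ad)` (so that `β = i*β ⊕ 0` for the decomposition
`U = W ⊕ W'`).  Then the inclusion `{g ∈ Hom(W,V) | g*ω = i*β} ↪ {f ∈ Hom(U,V) | f*ω = β}`,
given by extending linearly by zero on `W'` (equivalently, its image is the set of `f` in the
fiber vanishing on `W'`), admits a (strong) deformation retraction, induced by the linear
homotopy `H_t(w,w') = (w, t·w')`. -/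
theorem stmt5 {𝔽 U V Z : Type*} [RCLike 𝔽]
    [NormedAddCommGroup U] [NormedSpace 𝔽 U] [FiniteDimensional 𝔽 U]
    [NormedAddCommGroup V] [NormedSpace 𝔽 V] [FiniteDimensional 𝔽 V]
    [AddCommGroup Z] [Module 𝔽 Z]
    (ω : V →ₗ[𝔽] V →ₗ[𝔽] Z) (hω : ∀ v v', ω v v' = - ω v' v)
    (β : U →ₗ[𝔽] U →ₗ[𝔽] Z) (hβ : ∀ u u', β u u' = - β u' u)
    (W W' : Submodule 𝔽 U) (hc : IsCompl W W') (hW' : W' = LinearMap.ker β) :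
    ∃ H : C(ℝ × {f : U →L[𝔽] V //
          LinearMap.compl₁₂ ω (f : U →ₗ[𝔽] V) (f : U →ₗ[𝔽] V) = β},
        {f : U →L[𝔽] V // LinearMap.compl₁₂ ω (f : U →ₗ[𝔽] V) (f : U →ₗ[𝔽] V) = β}),
      -- the homotopy is induced by `H_t(w,w') = (w, t·w')`
      (∀ (t : ℝ) f, ((H (t, f)).1 : U →ₗ[𝔽] V)
          = ((f.1 : U →ₗ[𝔽] V)).comp
              ((W.subtype.comp (Submodule.linearProjOfIsCompl W W' hc))
                + ((t : 𝔽) • (W'.subtype.comp (Submodule.linearProjOfIsCompl W' W hc.symm)))))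
      -- it ends at the identity
      ∧ (∀ f, H (1, f) = f)
      -- it starts in the image of the inclusion, i.e. among maps vanishing on `W'`
      ∧ (∀ f, ∀ u ∈ W', ((H (0, f)).1 : U → V) u = 0)
      -- it fixes the image of the inclusion at all times
      ∧ (∀ (t : ℝ) f, (∀ u ∈ W', (f.1 : U → V) u = 0) → H (t, f) = f)
      -- and the image of the inclusion (maps vanishing on `W'`) consists exactly of the
      -- extensions by zero of the maps `g : W → V` with `g*ω = i*β`
      ∧ (∀ f : {f : U →L[𝔽] V //
            LinearMap.compl₁₂ ω (f : U →ₗ[𝔽] V) (f : U →ₗ[𝔽] V) = β},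
          (∀ u ∈ W', (f.1 : U → V) u = 0) ↔
            ∃ g : {g : ↥W →L[𝔽] V // LinearMap.compl₁₂ ω (g : ↥W →ₗ[𝔽] V) (g : ↥W →ₗ[𝔽] V)
                = LinearMap.compl₁₂ β W.subtype W.subtype},
              (f.1 : U →ₗ[𝔽] V)
                = ((g.1 : ↥W →ₗ[𝔽] V)).comp (Submodule.linearProjOfIsCompl W W' hc)) :=
  stmt5_general ω β hβ W W' hc hW'
end

section
/- The space X(2,n,2) = {M ∈ Mat_{2n×2}(ℝ) | Mᵀ Ω_n M = Ω_1} of real 2n×2 matrices satisfying the rank-2 symplectic condition is homeomorphic to S^{2n−1} × ℝ^{2n}; an explicit homeomorphism sends the column pairs (after the change of variables x₁ = u₁−v₁, y₂ = u₁+v₁, x₂ = v₂−u₂, y₁ = v₂+u₂) to the normalized vector (u₁,u₂)/‖(u₁,u₂)‖ together with (v₁,v₂). -/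
/-!
Since `Mᵀ Ω_n M` is antisymmetric, the condition `Mᵀ Ω_n M = Ω_1` is the single scalar equation
`ω(y, x) = 1` on the two columns `x, y` of `M`. The change of variables to `(u, v)` diagonalises
this quadratic form: `ω(y, x) = ‖u‖² − ‖v‖²`. So `X(2,n,2)` is linearly homeomorphic to the
hyperboloid `‖u‖² = 1 + ‖v‖²`, which `(u, v) ↦ (u / ‖u‖, v)` identifies with `S^{2n−1} × ℝ^{2n}`,
the inverse being `(s, v) ↦ (√(1 + ‖v‖²) s, v)`.
-/

open Matrix

/-- For a real `2n × 2` matrix `M` (rows indexed by `Fin n ⊕ Fin n`, columns by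
`Fin 1 ⊕ Fin 1`), with columns written via `x₁ = u₁−v₁`, `y₂ = u₁+v₁`, `x₂ = v₂−u₂`,
`y₁ = v₂+u₂`, the vector `(u₁,u₂) ∈ ℝ^{2n}`, i.e. `u₁ = (x₁+y₂)/2`, `u₂ = (y₁−x₂)/2`. -/
noncomputable def Uvec (n : ℕ) (M : Matrix (Fin n ⊕ Fin n) (Fin 1 ⊕ Fin 1) ℝ) :
    EuclideanSpace ℝ (Fin n ⊕ Fin n) :=
  WithLp.toLp 2 (Sum.elim (fun i => (M (Sum.inl i) (Sum.inl 0) + M (Sum.inr i) (Sum.inr 0)) / 2)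
    (fun i => (M (Sum.inr i) (Sum.inl 0) - M (Sum.inl i) (Sum.inr 0)) / 2))

/-- The vector `(v₁,v₂) ∈ ℝ^{2n}`, i.e. `v₁ = (y₂−x₁)/2`, `v₂ = (y₁+x₂)/2`. -/
noncomputable def Vvec (n : ℕ) (M : Matrix (Fin n ⊕ Fin n) (Fin 1 ⊕ Fin 1) ℝ) :
    EuclideanSpace ℝ (Fin n ⊕ Fin n) :=
  WithLp.toLp 2 (Sum.elim (fun i => (M (Sum.inr i) (Sum.inr 0) - M (Sum.inl i) (Sum.inl 0)) / 2)
    (fun i => (M (Sum.inr i) (Sum.inl 0) + M (Sum.inl i) (Sum.inr 0)) / 2))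

namespace Matrix

variable {l m R : Type*} [Fintype l] [DecidableEq l] [CommRing R]

theorem transpose_mul_J_mul_apply (M : Matrix (l ⊕ l) m R) (a b : m) :
    (Mᵀ * J l R * M) a b =
      ∑ i, (M (Sum.inr i) a * M (Sum.inl i) b - M (Sum.inl i) a * M (Sum.inr i) b) := by
  simp only [mul_apply, J, Fintype.sum_sum_type, fromBlocks_apply₁₁, fromBlocks_apply₁₂,
    fromBlocks_apply₂₁, fromBlocks_apply₂₂, transpose_apply]
  simp [one_apply, Finset.sum_add_distrib, mul_comm, sub_eq_add_neg]

theorem transpose_mul_J_mul_apply_self (M : Matrix (l ⊕ l) m R) (a : m) :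
    (Mᵀ * J l R * M) a a = 0 := by
  simp [transpose_mul_J_mul_apply, mul_comm]

theorem transpose_mul_J_mul_apply_comm (M : Matrix (l ⊕ l) m R) (a b : m) :
    (Mᵀ * J l R * M) b a = -(Mᵀ * J l R * M) a b := by
  simp only [transpose_mul_J_mul_apply, ← Finset.sum_neg_distrib, neg_sub, mul_comm]

theorem transpose_mul_J_mul_eq_J_iff (M : Matrix (l ⊕ l) (Fin 1 ⊕ Fin 1) R) :
    Mᵀ * J l R * M = J (Fin 1) R ↔ (Mᵀ * J l R * M) (Sum.inr 0) (Sum.inl 0) = 1 := by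
  refine ⟨fun h => by rw [h]; simp [J], fun h => ?_⟩
  ext (a | a) (b | b) <;> obtain rfl := Subsingleton.elim a 0 <;>
    obtain rfl := Subsingleton.elim b 0
  · rw [transpose_mul_J_mul_apply_self]; simp [J]
  · rw [transpose_mul_J_mul_apply_comm, h]; simp [J]
  · rw [h]; simp [J]
  · rw [transpose_mul_J_mul_apply_self]; simp [J]

end Matrix

section Hyperboloid

variable {E F : Type*} [SeminormedAddCommGroup E] [SeminormedAddCommGroup F]

theorem norm_pos_of_sq_norm_eq_one_add {x : E} {y : F} (h : ‖x‖ ^ 2 = 1 + ‖y‖ ^ 2) :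
    0 < ‖x‖ := by
  by_contra! hx
  nlinarith [norm_nonneg x, sq_nonneg ‖y‖]

variable [NormedSpace ℝ E]

noncomputable def hyperboloidHomeomorph :
    {p : E × F // ‖p.1‖ ^ 2 = 1 + ‖p.2‖ ^ 2} ≃ₜ Metric.sphere (0 : E) 1 × F where
  toFun p := (⟨‖p.1.1‖⁻¹ • p.1.1, by
      rw [mem_sphere_zero_iff_norm, norm_smul, norm_inv, norm_norm,
        inv_mul_cancel₀ (norm_pos_of_sq_norm_eq_one_add p.2).ne']⟩, p.1.2)
  invFun q := ⟨(√(1 + ‖q.2‖ ^ 2) • (q.1 : E), q.2), by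
      rw [norm_smul, norm_eq_of_mem_sphere q.1, mul_one, Real.norm_of_nonneg (Real.sqrt_nonneg _),
        Real.sq_sqrt (by positivity)]⟩
  left_inv p := by
    have hnorm : √(1 + ‖p.1.2‖ ^ 2) = ‖p.1.1‖ := by rw [← p.2, Real.sqrt_sq (norm_nonneg _)]
    ext : 2
    · simp only [hnorm, smul_smul, mul_inv_cancel₀ (norm_pos_of_sq_norm_eq_one_add p.2).ne',
        one_smul]
    · rfl
  right_inv q := by
    have hpos : 0 < √(1 + ‖q.2‖ ^ 2) := by positivity
    ext : 2
    · simp only [norm_smul, norm_eq_of_mem_sphere q.1, mul_one, Real.norm_of_nonneg hpos.le,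
        smul_smul, inv_mul_cancel₀ hpos.ne', one_smul]
    · rfl
  continuous_toFun := by
    have hfst := (continuous_subtype_val (p := fun p : E × F => ‖p.1‖ ^ 2 = 1 + ‖p.2‖ ^ 2)).fst
    refine .prodMk (.subtype_mk ?_ _) continuous_subtype_val.snd
    exact (hfst.norm.inv₀ fun p => (norm_pos_of_sq_norm_eq_one_add p.2).ne').smul hfst
  continuous_invFun := by
    refine .subtype_mk (.prodMk ?_ continuous_snd) _
    exact (continuous_const.add (continuous_snd.norm.pow 2)).sqrt.smul
      (continuous_subtype_val.comp continuous_fst)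

end Hyperboloid

theorem sq_norm_Uvec_sub_sq_norm_Vvec {n : ℕ} (M : Matrix (Fin n ⊕ Fin n) (Fin 1 ⊕ Fin 1) ℝ) :
    ‖Uvec n M‖ ^ 2 - ‖Vvec n M‖ ^ 2 = (Mᵀ * J (Fin n) ℝ * M) (Sum.inr 0) (Sum.inl 0) := by
  simp only [EuclideanSpace.real_norm_sq_eq, ← Finset.sum_sub_distrib, Fintype.sum_sum_type,
    ← Finset.sum_add_distrib, transpose_mul_J_mul_apply]
  refine Finset.sum_congr rfl fun i _ => ?_
  simp only [Uvec, Vvec, PiLp.toLp_apply, Sum.elim_inl, Sum.elim_inr]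
  ring

theorem transpose_mul_J_mul_eq_J_iff_sq_norm {n : ℕ}
    (M : Matrix (Fin n ⊕ Fin n) (Fin 1 ⊕ Fin 1) ℝ) :
    Mᵀ * J (Fin n) ℝ * M = J (Fin 1) ℝ ↔ ‖Uvec n M‖ ^ 2 = 1 + ‖Vvec n M‖ ^ 2 := by
  rw [transpose_mul_J_mul_eq_J_iff, ← sq_norm_Uvec_sub_sq_norm_Vvec, sub_eq_iff_eq_add]

noncomputable def uvLinearEquiv (n : ℕ) : Matrix (Fin n ⊕ Fin n) (Fin 1 ⊕ Fin 1) ℝ ≃ₗ[ℝ]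
    EuclideanSpace ℝ (Fin n ⊕ Fin n) × EuclideanSpace ℝ (Fin n ⊕ Fin n) where
  toFun M := (Uvec n M, Vvec n M)
  invFun p := Matrix.of fun i j =>
    match i, j with
    | Sum.inl i, Sum.inl _ => p.1 (Sum.inl i) - p.2 (Sum.inl i)
    | Sum.inr i, Sum.inl _ => p.1 (Sum.inr i) + p.2 (Sum.inr i)
    | Sum.inl i, Sum.inr _ => p.2 (Sum.inr i) - p.1 (Sum.inr i)
    | Sum.inr i, Sum.inr _ => p.1 (Sum.inl i) + p.2 (Sum.inl i)
  map_add' M N := by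
    ext (i | i) <;> simp [Uvec, Vvec] <;> ring
  map_smul' c M := by
    ext (i | i) <;> simp [Uvec, Vvec] <;> ring
  left_inv M := by
    ext (i | i) (j | j) <;> obtain rfl := Subsingleton.elim j 0 <;> simp [Uvec, Vvec] <;> ring
  right_inv p := by
    ext (i | i) <;> simp [Uvec, Vvec] <;> ring

theorem stmt10_general (n : ℕ) :
    ∃ e : {M : Matrix (Fin n ⊕ Fin n) (Fin 1 ⊕ Fin 1) ℝ //
            Mᵀ * Matrix.J (Fin n) ℝ * M = Matrix.J (Fin 1) ℝ}
          ≃ₜ Metric.sphere (0 : EuclideanSpace ℝ (Fin n ⊕ Fin n)) 1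
              × EuclideanSpace ℝ (Fin n ⊕ Fin n),
      ∀ M, ((e M).1 : EuclideanSpace ℝ (Fin n ⊕ Fin n)) = ‖Uvec n M.1‖⁻¹ • Uvec n M.1
        ∧ (e M).2 = Vvec n M.1 :=
  ⟨(Homeomorph.subtype (uvLinearEquiv n).toContinuousLinearEquiv.toHomeomorph
      transpose_mul_J_mul_eq_J_iff_sq_norm).trans hyperboloidHomeomorph,
    fun _ => ⟨rfl, rfl⟩⟩

/-- The space `X(2,n,2)` of real `2n × 2` matrices `M` with `Mᵀ Ω_n M = Ω_1` is homeomorphic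
to `S^{2n−1} × ℝ^{2n}`, via the homeomorphism sending `M` (after the change of variables
`x₁ = u₁−v₁`, `y₂ = u₁+v₁`, `x₂ = v₂−u₂`, `y₁ = v₂+u₂`) to the normalized vector
`(u₁,u₂)/‖(u₁,u₂)‖` together with `(v₁,v₂)`. -/
theorem stmt10 (n : ℕ) (hn : 1 ≤ n) :
    ∃ e : {M : Matrix (Fin n ⊕ Fin n) (Fin 1 ⊕ Fin 1) ℝ //
            Mᵀ * Matrix.J (Fin n) ℝ * M = Matrix.J (Fin 1) ℝ}
          ≃ₜ Metric.sphere (0 : EuclideanSpace ℝ (Fin n ⊕ Fin n)) 1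
              × EuclideanSpace ℝ (Fin n ⊕ Fin n),
      ∀ M, ((e M).1 : EuclideanSpace ℝ (Fin n ⊕ Fin n)) = ‖Uvec n M.1‖⁻¹ • Uvec n M.1
        ∧ (e M).2 = Vvec n M.1 :=
  stmt10_general n
end

section
/- The space X(2,n,0) = {M ∈ Mat_{2n×2}(ℝ) | Mᵀ Ω_n M = 0} of real 2n×2 matrices whose columns span an isotropic subspace is homeomorphic to the open cone C(S^{2n−1} × S^{2n−1}); in particular X(2,n,0) minus the zero matrix is homeomorphic to S^{2n−1} × S^{2n−1} × (0,∞). -/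
/-!
Write `a, b` for the two columns of `M`. Since `Jᵀ = -J`, the matrix `Mᵀ J M` is determined by
`ω(a, b) = ⟪a, J b⟫`, and `⟪a, J b⟫ = 0` iff `‖a + J b‖ = ‖a - J b‖`. The linear change of
variables `(a, b) ↦ (a + J b, a - J b)` thus identifies `X(2,n,0)` with
`{(u, v) : ‖u‖ = ‖v‖} ⊆ ℝ^{2n} × ℝ^{2n}`.

This set is the image of `[0,1) × S^{2n-1} × S^{2n-1}` under `(s, x, y) ↦ (s / (1 - s)) • (x, y)`,
which is injective except on `{0} × S × S`. Composed with the continuous height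
`‖u‖ / (1 + ‖u‖)` it becomes the projection onto `[0,1)`, which is proper because the spheres are
compact; hence the map itself is proper, so closed, and descends to a homeomorphism from the open
cone. Away from the origin, polar coordinates `(u, v) ↦ (u / ‖u‖, v / ‖v‖, ‖u‖)` give
`S × S × (0, ∞)`.
-/

open Matrix

/-- The open cone on a space `X`: the quotient `([0,1) × X) / ({0} × X)`. -/
def OpenCone (X : Type*) [TopologicalSpace X] : Type _ :=
  Quot (fun a b : (Set.Ico (0 : ℝ) 1) × X => (a.1.1 = 0 ∧ b.1.1 = 0) ∨ a = b)

instance (X : Type*) [TopologicalSpace X] : TopologicalSpace (OpenCone X) :=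
  instTopologicalSpaceQuot

open Metric Set Function

theorem norm_add_eq_norm_sub_iff_inner_eq_zero {V : Type*} [NormedAddCommGroup V]
    [InnerProductSpace ℝ V] (x y : V) : ‖x + y‖ = ‖x - y‖ ↔ inner ℝ x y = 0 :=
  (InnerProductGeometry.norm_add_eq_norm_sub_iff_angle_eq_pi_div_two x y).trans
    (InnerProductGeometry.inner_eq_zero_iff_angle_eq_pi_div_two x y).symm

namespace Matrix

theorem transpose_mul_mul_apply {m n R : Type*} [Fintype m] [CommRing R] (A : Matrix m m R)
    (M : Matrix m n R) (c c' : n) : (Mᵀ * A * M) c c' = M.col c ⬝ᵥ A *ᵥ M.col c' := by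
  simp only [mul_apply', col, dotProduct_mulVec]
  rfl

theorem dotProduct_mulVec_of_transpose_eq_neg {m R : Type*} [Fintype m] [CommRing R]
    {A : Matrix m m R} (hA : Aᵀ = -A) (x y : m → R) : y ⬝ᵥ A *ᵥ x = -(x ⬝ᵥ A *ᵥ y) := by
  rw [dotProduct_mulVec, dotProduct_comm, ← mulVec_transpose, hA, neg_mulVec, dotProduct_neg]

theorem transpose_mul_mul_eq_zero_iff {m R : Type*} [Fintype m] [CommRing R]
    [NoZeroDivisors R] [CharZero R] {A : Matrix m m R} (hA : Aᵀ = -A)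
    (M : Matrix m (Fin 1 ⊕ Fin 1) R) :
    Mᵀ * A * M = 0 ↔ M.col (.inl 0) ⬝ᵥ A *ᵥ M.col (.inr 0) = 0 := by
  have hdiag (x : m → R) : x ⬝ᵥ A *ᵥ x = 0 :=
    self_eq_neg.1 (dotProduct_mulVec_of_transpose_eq_neg hA x x)
  refine ⟨fun h => by simpa [transpose_mul_mul_apply] using congrFun₂ h (.inl 0) (.inr 0),
    fun h => ?_⟩
  ext (i | i) (j | j) <;>
    simp [transpose_mul_mul_apply, Fin.fin_one_eq_zero, hdiag, h,
      dotProduct_mulVec_of_transpose_eq_neg hA (M.col _)]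

variable {l : Type*} [Fintype l] [DecidableEq l]

theorem J_mulVec_J_mulVec {R : Type*} [CommRing R] (v : l ⊕ l → R) :
    J l R *ᵥ J l R *ᵥ v = -v := by
  rw [mulVec_mulVec, J_squared, neg_mulVec, one_mulVec]

noncomputable def symplecticCoords :
    Matrix (l ⊕ l) (Fin 1 ⊕ Fin 1) ℝ ≃ₜ EuclideanSpace ℝ (l ⊕ l) × EuclideanSpace ℝ (l ⊕ l) where
  toFun M := (WithLp.toLp 2 (M.col (.inl 0) + J l ℝ *ᵥ M.col (.inr 0)),
    WithLp.toLp 2 (M.col (.inl 0) - J l ℝ *ᵥ M.col (.inr 0)))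
  invFun p := fromCols (replicateCol (Fin 1) ((2 : ℝ)⁻¹ • (p.1.ofLp + p.2.ofLp)))
    (replicateCol (Fin 1) ((2 : ℝ)⁻¹ • J l ℝ *ᵥ (p.2.ofLp - p.1.ofLp)))
  left_inv M := by
    set a := M.col (.inl 0)
    set b := M.col (.inr 0)
    have ha : (2 : ℝ)⁻¹ • ((a + J l ℝ *ᵥ b) + (a - J l ℝ *ᵥ b)) = a := by module
    have hb : (2 : ℝ)⁻¹ • J l ℝ *ᵥ ((a - J l ℝ *ᵥ b) - (a + J l ℝ *ᵥ b)) = b := by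
      rw [show (a - J l ℝ *ᵥ b) - (a + J l ℝ *ᵥ b) = (-2 : ℝ) • J l ℝ *ᵥ b by module,
        mulVec_smul, J_mulVec_J_mulVec]
      module
    ext i (j | j) <;> obtain rfl := Subsingleton.elim j 0
    exacts [congrFun ha i, congrFun hb i]
  right_inv p := by
    set u := p.1.ofLp
    set v := p.2.ofLp
    have hJ : J l ℝ *ᵥ ((2 : ℝ)⁻¹ • J l ℝ *ᵥ (v - u)) = (2 : ℝ)⁻¹ • (u - v) := by
      rw [mulVec_smul, J_mulVec_J_mulVec, neg_sub]
    refine Prod.ext (WithLp.ofLp_injective 2 ?_) (WithLp.ofLp_injective 2 ?_)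
    · change (2 : ℝ)⁻¹ • (u + v) + J l ℝ *ᵥ ((2 : ℝ)⁻¹ • J l ℝ *ᵥ (v - u)) = u
      rw [hJ]
      module
    · change (2 : ℝ)⁻¹ • (u + v) - J l ℝ *ᵥ ((2 : ℝ)⁻¹ • J l ℝ *ᵥ (v - u)) = v
      rw [hJ]
      module
  continuous_toFun := by
    unfold col
    fun_prop
  continuous_invFun := by
    refine continuous_pi fun i => continuous_pi fun c => ?_
    cases c <;>
      simp only [fromCols_apply_inl, fromCols_apply_inr, replicateCol_apply] <;> fun_prop

theorem symplecticCoords_apply (M : Matrix (l ⊕ l) (Fin 1 ⊕ Fin 1) ℝ) :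
    symplecticCoords M = (WithLp.toLp 2 (M.col (.inl 0) + J l ℝ *ᵥ M.col (.inr 0)),
      WithLp.toLp 2 (M.col (.inl 0) - J l ℝ *ᵥ M.col (.inr 0))) :=
  rfl

theorem symplecticCoords_zero : symplecticCoords (0 : Matrix (l ⊕ l) (Fin 1 ⊕ Fin 1) ℝ) = 0 := by
  have : (0 : Matrix (l ⊕ l) (Fin 1 ⊕ Fin 1) ℝ).col = 0 := rfl
  simp [symplecticCoords_apply, this]

theorem transpose_mul_J_mul_eq_zero_iff_norm_eq (M : Matrix (l ⊕ l) (Fin 1 ⊕ Fin 1) ℝ) :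
    Mᵀ * J l ℝ * M = 0 ↔ ‖(symplecticCoords M).1‖ = ‖(symplecticCoords M).2‖ := by
  rw [transpose_mul_mul_eq_zero_iff (J_transpose l ℝ), symplecticCoords_apply, WithLp.toLp_add, WithLp.toLp_sub,
    norm_add_eq_norm_sub_iff_inner_eq_zero, EuclideanSpace.inner_toLp_toLp, star_trivial,
    dotProduct_comm]

end Matrix

namespace OpenCone

theorem isHomeomorph_lift {X Z : Type*} [TopologicalSpace X] [CompactSpace X]
    [TopologicalSpace Z] [T2Space Z] (f : Ico (0 : ℝ) 1 × X → Z) (hf : Continuous f)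
    (hf_surj : Surjective f) (hf_eq : ∀ a b, f a = f b ↔ (a.1.1 = 0 ∧ b.1.1 = 0) ∨ a = b)
    (ρ : Z → Ico (0 : ℝ) 1) (hρ : Continuous ρ) (hρf : ∀ a, ρ (f a) = a.1) :
    IsHomeomorph (Quot.lift f (fun a b h => (hf_eq a b).2 h) : OpenCone X → Z) := by
  have hproper : IsProperMap f := by
    refine isProperMap_of_comp_of_t2 hf hρ ?_
    convert isProperMap_fst_of_compactSpace (X := Ico (0 : ℝ) 1) (Y := X)
    exact funext hρf
  refine isHomeomorph_iff_continuous_isClosedMap_bijective.2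
    ⟨continuous_quot_lift _ hf, fun C hC => ?_, ?_, ?_⟩
  · rw [← Quot.mk_surjective.image_preimage C, ← image_comp]
    exact hproper.isClosedMap _ (hC.preimage continuous_quot_mk)
  · rintro ⟨a⟩ ⟨b⟩ h
    exact Quot.sound ((hf_eq a b).1 h)
  · intro z
    obtain ⟨a, rfl⟩ := hf_surj z
    exact ⟨Quot.mk _ a, rfl⟩

end OpenCone

theorem exists_mem_sphere_norm_smul_eq {E : Type*} [NormedAddCommGroup E] [NormedSpace ℝ E]
    [Nontrivial E] (v : E) : ∃ x ∈ sphere (0 : E) 1, ‖v‖ • x = v := by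
  rcases eq_or_ne v 0 with rfl | hv
  · obtain ⟨x, hx⟩ := (NormedSpace.sphere_nonempty (x := (0 : E))).2 zero_le_one
    exact ⟨x, hx, by simp⟩
  · exact ⟨‖v‖⁻¹ • v, norm_smul_inv_norm (𝕜 := ℝ) hv ▸ mem_sphere_zero_iff_norm.2 rfl,
      smul_inv_smul₀ (norm_ne_zero_iff.2 hv) v⟩

section NormEq

variable {E F : Type*} [NormedAddCommGroup E] [NormedAddCommGroup F]

theorem norm_fst_pos_of_norm_eq {p : E × F} (h : ‖p.1‖ = ‖p.2‖) (hp : p ≠ 0) : 0 < ‖p.1‖ := by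
  refine norm_pos_iff.2 fun h1 => hp (Prod.ext h1 (norm_eq_zero.1 ?_))
  rw [← h, h1, norm_zero]

namespace NormEqCone

noncomputable def height (p : {p : E × F // ‖p.1‖ = ‖p.2‖}) : Ico (0 : ℝ) 1 :=
  ⟨‖p.1.1‖ / (1 + ‖p.1.1‖), by positivity, (div_lt_one (by positivity)).2 (by linarith)⟩

theorem continuous_height : Continuous (height (E := E) (F := F)) := by
  unfold height
  fun_prop (disch := exact fun p => by positivity)

variable [NormedSpace ℝ E] [NormedSpace ℝ F]

noncomputable def coneMap (a : Ico (0 : ℝ) 1 × (sphere (0 : E) 1 × sphere (0 : F) 1)) :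
    {p : E × F // ‖p.1‖ = ‖p.2‖} :=
  ⟨(a.1 / (1 - a.1) : ℝ) • ((a.2.1 : E), (a.2.2 : F)), by simp [norm_smul]⟩

theorem continuous_coneMap : Continuous (coneMap (E := E) (F := F)) := by
  unfold coneMap
  fun_prop (disch := exact fun a => (sub_pos.2 a.1.2.2).ne')

theorem height_coneMap (a : Ico (0 : ℝ) 1 × (sphere (0 : E) 1 × sphere (0 : F) 1)) :
    height (coneMap a) = a.1 := by
  obtain ⟨⟨s, hs₀, hs₁⟩, x, y⟩ := a
  have : 0 < 1 - s := by linarith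
  ext
  simp only [height, coneMap, Prod.smul_mk, norm_smul, norm_div, Real.norm_eq_abs,
    abs_of_nonneg hs₀, abs_of_pos this, norm_eq_of_mem_sphere, mul_one]
  field_simp
  ring

theorem surjective_coneMap [Nontrivial E] [Nontrivial F] :
    Surjective (coneMap (E := E) (F := F)) := by
  rintro ⟨⟨u, v⟩, huv : ‖u‖ = ‖v‖⟩
  obtain ⟨x, hx, hxu⟩ := exists_mem_sphere_norm_smul_eq u
  obtain ⟨y, hy, hyv⟩ := exists_mem_sphere_norm_smul_eq v
  refine ⟨(height ⟨(u, v), huv⟩, ⟨x, hx⟩, ⟨y, hy⟩), ?_⟩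
  have hnorm : ‖u‖ / (1 + ‖u‖) / (1 - ‖u‖ / (1 + ‖u‖)) = ‖u‖ := by
    have : 0 < 1 + ‖u‖ := by positivity
    field_simp
    ring
  rw [← huv] at hyv
  ext <;> simp [coneMap, height, hnorm, hxu, hyv]

theorem coneMap_eq_iff (a b : Ico (0 : ℝ) 1 × (sphere (0 : E) 1 × sphere (0 : F) 1)) :
    coneMap a = coneMap b ↔ (a.1.1 = 0 ∧ b.1.1 = 0) ∨ a = b := by
  refine ⟨fun h => ?_, ?_⟩
  · obtain ⟨s, x, y⟩ := a
    obtain ⟨s', x', y'⟩ := b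
    obtain rfl : s = s' := by simpa only [height_coneMap] using congrArg height h
    refine or_iff_not_imp_left.2 fun h0 => ?_
    have hs : (s / (1 - s) : ℝ) ≠ 0 :=
      div_ne_zero (fun hs => h0 ⟨hs, hs⟩) (sub_pos.2 s.2.2).ne'
    have hxy := smul_right_injective (E × F) hs (congrArg Subtype.val h)
    simp only [Prod.mk.injEq] at hxy
    rw [Subtype.ext hxy.1, Subtype.ext hxy.2]
  · rintro (⟨ha, hb⟩ | rfl)
    · ext <;> simp [coneMap, ha, hb]
    · rfl

end NormEqCone

variable [NormedSpace ℝ E] [NormedSpace ℝ F]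

noncomputable def normEqHomeomorphOpenCone [ProperSpace E] [ProperSpace F] [Nontrivial E]
    [Nontrivial F] :
    {p : E × F // ‖p.1‖ = ‖p.2‖} ≃ₜ OpenCone (sphere (0 : E) 1 × sphere (0 : F) 1) :=
  (OpenCone.isHomeomorph_lift _ NormEqCone.continuous_coneMap NormEqCone.surjective_coneMap
    NormEqCone.coneMap_eq_iff _ NormEqCone.continuous_height
    NormEqCone.height_coneMap).homeomorph.symm

noncomputable def normEqNeZeroHomeomorph :
    {p : E × F // ‖p.1‖ = ‖p.2‖ ∧ p ≠ 0} ≃ₜ sphere (0 : E) 1 × sphere (0 : F) 1 × Ioi (0 : ℝ) where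
  toFun p :=
    have h₁ := norm_fst_pos_of_norm_eq p.2.1 p.2.2
    have h₂ := p.2.1 ▸ h₁
    (⟨‖p.1.1‖⁻¹ • p.1.1, by simp [norm_smul, h₁.ne']⟩,
      ⟨‖p.1.2‖⁻¹ • p.1.2, by simp [norm_smul, h₂.ne']⟩, ⟨‖p.1.1‖, h₁⟩)
  invFun q := ⟨(q.2.2 : ℝ) • ((q.1 : E), (q.2.1 : F)), by simp [norm_smul],
    smul_ne_zero q.2.2.2.ne' fun h => by simpa using congrArg (‖·.1‖) h⟩
  left_inv p := by
    have h₁ := norm_fst_pos_of_norm_eq p.2.1 p.2.2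
    ext <;> simp [p.2.1 ▸ h₁.ne', p.2.1]
  right_inv q := by
    have hq : 0 < (q.2.2 : ℝ) := q.2.2.2
    ext <;> simp [norm_smul, abs_of_pos hq, hq.ne']
  continuous_toFun := by
    have h₁ (p : {p : E × F // ‖p.1‖ = ‖p.2‖ ∧ p ≠ 0}) : ‖p.1.1‖ ≠ 0 :=
      (norm_fst_pos_of_norm_eq p.2.1 p.2.2).ne'
    have h₂ (p : {p : E × F // ‖p.1‖ = ‖p.2‖ ∧ p ≠ 0}) : ‖p.1.2‖ ≠ 0 := p.2.1 ▸ h₁ p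
    refine .prodMk (.subtype_mk ?_ _) (.prodMk (.subtype_mk ?_ _) (.subtype_mk ?_ _)) <;>
      fun_prop (disch := assumption)
  continuous_invFun := by fun_prop

end NormEq

/-- The space `X(2,n,0)` of real `2n × 2` matrices whose two columns span an isotropic
subspace of `(ℝ^{2n}, ω_n)` is homeomorphic to the open cone
`C(S^{2n−1} × S^{2n−1})`; in particular `X(2,n,0)` minus the zero matrix is homeomorphic to
`S^{2n−1} × S^{2n−1} × (0,∞)`. -/
theorem stmt11 (n : ℕ) (hn : 1 ≤ n) :
    Nonempty
      ({M : Matrix (Fin n ⊕ Fin n) (Fin 1 ⊕ Fin 1) ℝ //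
          Mᵀ * Matrix.J (Fin n) ℝ * M = 0}
        ≃ₜ OpenCone (Metric.sphere (0 : EuclideanSpace ℝ (Fin n ⊕ Fin n)) 1
            × Metric.sphere (0 : EuclideanSpace ℝ (Fin n ⊕ Fin n)) 1))
      ∧ Nonempty
        ({M : Matrix (Fin n ⊕ Fin n) (Fin 1 ⊕ Fin 1) ℝ //
            Mᵀ * Matrix.J (Fin n) ℝ * M = 0 ∧ M ≠ 0}
          ≃ₜ Metric.sphere (0 : EuclideanSpace ℝ (Fin n ⊕ Fin n)) 1
              × Metric.sphere (0 : EuclideanSpace ℝ (Fin n ⊕ Fin n)) 1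
              × Set.Ioi (0 : ℝ)) := by
  have : Nonempty (Fin n) := ⟨⟨0, hn⟩⟩
  have hne (M : Matrix (Fin n ⊕ Fin n) (Fin 1 ⊕ Fin 1) ℝ) : M ≠ 0 ↔ symplecticCoords M ≠ 0 :=
    (symplecticCoords.injective.ne_iff' symplecticCoords_zero).symm
  exact ⟨⟨(symplecticCoords.subtype transpose_mul_J_mul_eq_zero_iff_norm_eq).trans
      normEqHomeomorphOpenCone⟩,
    ⟨(symplecticCoords.subtype fun M =>
      and_congr (transpose_mul_J_mul_eq_zero_iff_norm_eq M) (hne M)).trans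
      normEqNeZeroHomeomorph⟩⟩
end

section
/- Let V be a d-dimensional subspace of ℝ^k (or ℂ^k), A = ℤ^k (resp. the Gaussian integer lattice), and ρ_V: 𝔽^k → V the orthogonal projection. Then rank(V ∩ A) = d if and only if rank(ρ_V(A)) = d (as abelian groups). -/
/-- The standard lattice `ℤ^k ⊂ ℝ^k`. -/
noncomputable def intLattice (k : ℕ) : AddSubgroup (EuclideanSpace ℝ (Fin k)) :=
  AddSubgroup.closure (Set.range fun i : Fin k => EuclideanSpace.single i (1 : ℝ))

/-!
The lattice points of a subspace `W` form a discrete subgroup, so their `ℤ`-rank equals the real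
dimension of their span; hence `rank (W ∩ ℤ^k) = dim W` exactly when `W` is spanned by integer
vectors. In that case `Wᗮ` is the real solution space of an integer linear system of rank
`dim W`, and by rank-nullity over `ℤ` its integer solutions already have rank `k - dim W`, so
`Wᗮ` is again spanned by integer vectors. Finally the kernel of `ρ_V` on `ℤ^k` is `Vᗮ ∩ ℤ^k`,
so `rank ρ_V(ℤ^k) = k - rank (Vᗮ ∩ ℤ^k)`, and both conditions say that `V` (equivalently `Vᗮ`)
is spanned by integer vectors.
-/

open Module Submodule

theorem LinearMap.finrank_range_add_finrank_ker_of_isDomain {R M N : Type*} [CommRing R]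
    [IsDomain R] [AddCommGroup M] [Module R M] [Module.Finite R M] [AddCommGroup N]
    [Module R N] (f : M →ₗ[R] N) :
    finrank R (LinearMap.range f) + finrank R (LinearMap.ker f) = finrank R M := by
  rw [← f.quotKerEquivRange.finrank_eq]
  exact (LinearMap.ker f).finrank_quotient_add_finrank

theorem finrank_int_eq_finrank_span_real {E : Type*} [NormedAddCommGroup E] [NormedSpace ℝ E]
    [FiniteDimensional ℝ E] {Λ P : Submodule ℤ E} [DiscreteTopology Λ] (hP : P ≤ Λ) :
    finrank ℤ P = finrank ℝ (span ℝ (P : Set E)) := by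
  have : DiscreteTopology (span ℤ (P : Set E)) := by
    rw [span_eq]
    exact DiscreteTopology.of_subset ‹_› hP
  have h := Real.finrank_eq_int_finrank_of_discrete this
  rw [Set.finrank, Set.finrank, span_eq] at h
  exact h.symm

noncomputable section

namespace OrthonormalBasis

variable {ι E : Type*} [Fintype ι] [NormedAddCommGroup E] [InnerProductSpace ℝ E]
  (b : OrthonormalBasis ι ℝ E)

def intCombination : (ι → ℤ) →ₗ[ℤ] E := Fintype.linearCombination ℤ b

theorem intCombination_apply (n : ι → ℤ) : b.intCombination n = ∑ i, (n i : ℝ) • b i := by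
  simp [intCombination, Fintype.linearCombination_apply, Int.cast_smul_eq_zsmul]

theorem inner_intCombination (m n : ι → ℤ) :
    inner ℝ (b.intCombination m) (b.intCombination n) = ((m ⬝ᵥ n : ℤ) : ℝ) := by
  classical
  simp [intCombination_apply, inner_sum, sum_inner, inner_smul_left, inner_smul_right,
    b.inner_eq_ite, dotProduct, mul_comm]

theorem intCombination_injective : Function.Injective b.intCombination :=
  linearIndependent_iff_injective_fintypeLinearCombination.mp
    (b.orthonormal.linearIndependent.restrict_scalars' ℤ)

theorem range_intCombination : LinearMap.range b.intCombination = span ℤ (Set.range b) :=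
  Fintype.range_linearCombination ℤ b

instance : DiscreteTopology (LinearMap.range b.intCombination) := by
  rw [range_intCombination, ← b.coe_toBasis]
  infer_instance

/-- The lattice points of `W`, in coordinates with respect to `b`. -/
def intPoints (W : Submodule ℝ E) : Submodule ℤ (ι → ℤ) :=
  comap b.intCombination (W.restrictScalars ℤ)

theorem span_image_intPoints_le (W : Submodule ℝ E) :
    span ℝ (b.intCombination '' b.intPoints W) ≤ W :=
  span_le.mpr (Set.image_subset_iff.mpr fun _ hn ↦ hn)

variable [FiniteDimensional ℝ E]

theorem finrank_intPoints_eq_finrank_span (W : Submodule ℝ E) :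
    finrank ℤ (b.intPoints W) = finrank ℝ (span ℝ (b.intCombination '' b.intPoints W)) := by
  rw [(equivMapOfInjective _ b.intCombination_injective _).finrank_eq, ← map_coe]
  exact finrank_int_eq_finrank_span_real LinearMap.map_le_range

theorem finrank_intPoints_le (W : Submodule ℝ E) : finrank ℤ (b.intPoints W) ≤ finrank ℝ W :=
  b.finrank_intPoints_eq_finrank_span W ▸ finrank_mono (b.span_image_intPoints_le W)

theorem span_image_intPoints_eq_of_finrank_eq {W : Submodule ℝ E}
    (h : finrank ℤ (b.intPoints W) = finrank ℝ W) :
    span ℝ (b.intCombination '' b.intPoints W) = W :=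
  eq_of_le_of_finrank_eq (b.span_image_intPoints_le W)
    (by rw [← finrank_intPoints_eq_finrank_span, h])

theorem finrank_intPoints_orthogonal_of_finrank_eq {W : Submodule ℝ E}
    (h : finrank ℤ (b.intPoints W) = finrank ℝ W) :
    finrank ℤ (b.intPoints Wᗮ) = finrank ℝ Wᗮ := by
  set P := b.intPoints W
  let ψ : (ι → ℤ) →ₗ[ℤ] Module.Dual ℤ P := (dotProductBilin ℤ ℤ).compl₂ P.subtype
  -- An integer vector orthogonal to all of `P` is orthogonal to `W`, since `P` spans `W`.
  have hker : LinearMap.ker ψ ≤ b.intPoints Wᗮ := by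
    intro n hn
    have hortho : span ℝ (b.intCombination '' P) ⟂ span ℝ {b.intCombination n} := by
      rw [isOrtho_span]
      rintro _ ⟨p, hp, rfl⟩ _ rfl
      rw [inner_intCombination, dotProduct_comm]
      exact_mod_cast LinearMap.congr_fun hn ⟨p, hp⟩
    rw [b.span_image_intPoints_eq_of_finrank_eq h] at hortho
    exact hortho.symm.le (mem_span_singleton_self _)
  have hrange : finrank ℤ (LinearMap.range ψ) ≤ finrank ℤ P :=
    (finrank_le _).trans_eq (Free.chooseBasis ℤ P).toDualEquiv.finrank_eq.symm
  have hnullity := ψ.finrank_range_add_finrank_ker_of_isDomain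
  rw [finrank_fintype_fun_eq_card, ← finrank_eq_card_basis b.toBasis] at hnullity
  have hsum := W.finrank_add_finrank_orthogonal
  have hlower := finrank_mono hker
  have hupper := b.finrank_intPoints_le Wᗮ
  omega

theorem finrank_range_orthogonalProjectionOnto_comp_add_finrank_intPoints_orthogonal
    (V : Submodule ℝ E) :
    finrank ℤ (LinearMap.range
        (((V.orthogonalProjectionOnto : E →ₗ[ℝ] V).restrictScalars ℤ) ∘ₗ b.intCombination)) +
      finrank ℤ (b.intPoints Vᗮ) = finrank ℝ E := by
  have := (((V.orthogonalProjectionOnto : E →ₗ[ℝ] V).restrictScalars ℤ) ∘ₗ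
    b.intCombination).finrank_range_add_finrank_ker_of_isDomain
  rwa [LinearMap.ker_comp, LinearMap.ker_restrictScalars, ker_orthogonalProjectionOnto,
    finrank_fintype_fun_eq_card, ← finrank_eq_card_basis b.toBasis] at this

theorem finrank_intPoints_eq_iff_finrank_range_orthogonalProjectionOnto_comp_eq
    (V : Submodule ℝ E) :
    finrank ℤ (b.intPoints V) = finrank ℝ V ↔
      finrank ℤ (LinearMap.range
        (((V.orthogonalProjectionOnto : E →ₗ[ℝ] V).restrictScalars ℤ) ∘ₗ b.intCombination)) =
        finrank ℝ V := by
  have hnullity := b.finrank_range_orthogonalProjectionOnto_comp_add_finrank_intPoints_orthogonal V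
  have hsum := V.finrank_add_finrank_orthogonal
  constructor
  · intro h
    have := b.finrank_intPoints_orthogonal_of_finrank_eq h
    omega
  · intro h
    have := b.finrank_intPoints_orthogonal_of_finrank_eq (W := Vᗮ) (by omega)
    rwa [orthogonal_orthogonal] at this

end OrthonormalBasis

section intLattice

variable {k : ℕ}

theorem intLattice_eq_range :
    intLattice k =
      (LinearMap.range (EuclideanSpace.basisFun (Fin k) ℝ).intCombination).toAddSubgroup := by
  rw [OrthonormalBasis.range_intCombination, span_int_eq_addSubgroupClosure, intLattice]
  congr 2
  ext i : 1
  exact (EuclideanSpace.basisFun_apply _ _ i).symm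

theorem finrank_inf_intLattice (V : Submodule ℝ (EuclideanSpace ℝ (Fin k))) :
    finrank ℤ ↥(V.toAddSubgroup ⊓ intLattice k) =
      finrank ℤ ((EuclideanSpace.basisFun (Fin k) ℝ).intPoints V) := by
  set b := EuclideanSpace.basisFun (Fin k) ℝ
  have : V.toAddSubgroup ⊓ intLattice k = (map b.intCombination (b.intPoints V)).toAddSubgroup := by
    rw [intLattice_eq_range, OrthonormalBasis.intPoints, map_comap_eq, inf_comm]
    rfl
  rw [this]
  exact (equivMapOfInjective _ b.intCombination_injective _).finrank_eq.symm

theorem finrank_map_intLattice {F : Type*} [AddCommGroup F] [Module ℝ F]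
    (f : EuclideanSpace ℝ (Fin k) →ₗ[ℝ] F) :
    finrank ℤ ↥(AddSubgroup.map f.toAddMonoidHom (intLattice k)) =
      finrank ℤ (LinearMap.range
        (f.restrictScalars ℤ ∘ₗ (EuclideanSpace.basisFun (Fin k) ℝ).intCombination)) := by
  rw [intLattice_eq_range, LinearMap.range_comp]
  rfl

end intLattice

end

/-- Let `V` be a `d`-dimensional subspace of `ℝ^k`, `A = ℤ^k` the standard lattice and
`ρ_V : ℝ^k → V` the orthogonal projection.  Then `V ∩ A` has rank `d` (as an abelian group)
if and only if `ρ_V(A)` has rank `d`. -/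
theorem stmt17 (k d : ℕ) (V : Submodule ℝ (EuclideanSpace ℝ (Fin k)))
    (hV : Module.finrank ℝ ↥V = d) :
    Module.finrank ℤ ↥(V.toAddSubgroup ⊓ intLattice k) = d ↔
      Module.finrank ℤ
        ↥(AddSubgroup.map
            ((Submodule.orthogonalProjectionOnto V : EuclideanSpace ℝ (Fin k) →L[ℝ] V)
              : EuclideanSpace ℝ (Fin k) →ₗ[ℝ] V).toAddMonoidHom
            (intLattice k)) = d := by
  rw [finrank_inf_intLattice, finrank_map_intLattice, ← hV]
  exact (EuclideanSpace.basisFun (Fin k) ℝ)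
    |>.finrank_intPoints_eq_iff_finrank_range_orthogonalProjectionOnto_comp_eq V
end
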